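/- If b and d are functions in dyadic BMO, then ‖Ŝ(b∘d)‖_CM + ‖E(b∘d)‖_{ℓ∞} ≲ ‖b‖_{BMO^𝒟} ‖d‖_{BMO^𝒟}, where b∘d denotes the Schur product of their Haar coefficient sequences {⟨b,h_I⟩⟨d,h_I⟩}_{I∈𝒟}. -/

import Mathlib

open MeasureTheory Set
open scoped ENNReal NNReal

structure DyadicInterval where
  n : ℤ
  k : ℤ

namespace DyadicInterval

/-- The length `2^n` of a dyadic interval. -/
noncomputable def len (I : DyadicInterval) : ℝ := (2 : ℝ) ^ I.n

/-- The left endpoint `k · 2^n` of a dyadic interval. -/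
noncomputable def leftEnd (I : DyadicInterval) : ℝ := (I.k : ℝ) * (2 : ℝ) ^ I.n

/-- The dyadic interval `[k·2^n, (k+1)·2^n)` as a subset of `ℝ`. -/
noncomputable def toSet (I : DyadicInterval) : Set ℝ :=
  Set.Ico ((I.k : ℝ) * (2 : ℝ) ^ I.n) (((I.k : ℝ) + 1) * (2 : ℝ) ^ I.n)

/-- The left dyadic child. -/
def left (I : DyadicInterval) : DyadicInterval := ⟨I.n - 1, 2 * I.k⟩

/-- The right dyadic child. -/
def right (I : DyadicInterval) : DyadicInterval := ⟨I.n - 1, 2 * I.k + 1⟩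

/-- The Haar function `h_I = |I|^{-1/2} (1_{I⁺} - 1_{I⁻})`. -/
noncomputable def haar (I : DyadicInterval) : ℝ → ℝ := fun x =>
  (Real.sqrt I.len)⁻¹ *
    (Set.indicator I.left.toSet (fun _ => (1 : ℝ)) x -
      Set.indicator I.right.toSet (fun _ => (1 : ℝ)) x)

/-- Containment of dyadic intervals, as containment of the underlying sets. -/
instance : LE DyadicInterval := ⟨fun J I => J.toSet ⊆ I.toSet⟩

/-- Strict containment of dyadic intervals. -/
instance : LT DyadicInterval := ⟨fun J I => J.toSet ⊂ I.toSet⟩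

/-- The (constant) value `h_I(J)` of the Haar function `h_I` on a subinterval `J ⊊ I`,
read off at the left endpoint of `J`. -/
noncomputable def haarVal (I J : DyadicInterval) : ℝ := I.haar J.leftEnd

end DyadicInterval

/-- The average `⟨f⟩_I = |I|⁻¹ ∫_I f`. -/
noncomputable def avg (f : ℝ → ℝ) (I : DyadicInterval) : ℝ :=
  I.len⁻¹ * ∫ x in I.toSet, f x

/-- The Haar coefficient `⟨f, h_I⟩ = ∫ f h_I`. -/
noncomputable def haarInner (f : ℝ → ℝ) (I : DyadicInterval) : ℝ :=
  ∫ x, f x * I.haar x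

/-- The Carleson measure norm of a real sequence indexed by dyadic intervals. -/
noncomputable def CMnormR (a : DyadicInterval → ℝ) : ℝ≥0∞ :=
  ⨆ I : DyadicInterval,
    (ENNReal.ofReal I.len⁻¹ *
      ∑' J : {J : DyadicInterval // J ≤ I}, ENNReal.ofReal (|a J.1| ^ 2)) ^ (1 / 2 : ℝ)

/-- The `ℓ∞` norm of a real sequence indexed by dyadic intervals. -/
noncomputable def linftyNormR (a : DyadicInterval → ℝ) : ℝ≥0∞ :=
  ⨆ I : DyadicInterval, ENNReal.ofReal |a I|

/-- The sequence `E(a)_I = |I|⁻¹ ∑_{J ⊆ I} a_J`. -/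
noncomputable def EseqR (a : DyadicInterval → ℝ) : DyadicInterval → ℝ := fun I =>
  I.len⁻¹ * ∑' J : {J : DyadicInterval // J ≤ I}, a J.1

/-- The sweep `Ŝ(a)_I = ∑_{J ⊊ I} a_J h_I(J)`. -/
noncomputable def sweepR (a : DyadicInterval → ℝ) : DyadicInterval → ℝ := fun I =>
  ∑' J : {J : DyadicInterval // J < I}, a J.1 * I.haarVal J.1

/-- The Schur product `(b ∘ d)_I = b_I d_I`. -/
def schurR (b d : DyadicInterval → ℝ) : DyadicInterval → ℝ := fun I => b I * d I


/- ======================================================================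
   Auxiliary development
   ====================================================================== -/

instance : DecidableEq DyadicInterval :=
  fun a b => decidable_of_iff (a.n = b.n ∧ a.k = b.k) (by cases a; cases b; simp)

namespace DyadicInterval


lemma len_pos (I : DyadicInterval) : 0 < I.len := by unfold len; positivity

lemma toSet_eq (I : DyadicInterval) : I.toSet = Set.Ico I.leftEnd (I.leftEnd + I.len) := by
  unfold toSet leftEnd len; ring_nf

lemma leftEnd_mem (I : DyadicInterval) : I.leftEnd ∈ I.toSet := by
  rw [toSet_eq]; exact ⟨le_refl _, by linarith [I.len_pos]⟩

lemma nonempty (I : DyadicInterval) : I.toSet.Nonempty := ⟨I.leftEnd, I.leftEnd_mem⟩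

lemma le_def {J I : DyadicInterval} : J ≤ I ↔ J.toSet ⊆ I.toSet := Iff.rfl
lemma lt_def {J I : DyadicInterval} : J < I ↔ J.toSet ⊂ I.toSet := Iff.rfl

lemma le_iff_ends {J I : DyadicInterval} :
    J ≤ I ↔ I.leftEnd ≤ J.leftEnd ∧ J.leftEnd + J.len ≤ I.leftEnd + I.len := by
  rw [le_def, toSet_eq, toSet_eq, Set.Ico_subset_Ico_iff (by linarith [J.len_pos])]

lemma le_refl' (I : DyadicInterval) : I ≤ I := subset_refl I.toSet

lemma le_trans' {a b c : DyadicInterval} (hab : a ≤ b) (hbc : b ≤ c) : a ≤ c :=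
  Set.Subset.trans hab hbc

lemma le_of_lt' {J I : DyadicInterval} (h : J < I) : J ≤ I := (lt_def.mp h).subset

lemma lt_of_le_of_lt' {a b c : DyadicInterval} (h1 : a ≤ b) (h2 : b < c) : a < c :=
  lt_def.mpr (ssubset_of_subset_of_ssubset (le_def.mp h1) (lt_def.mp h2))

lemma len_le_of_le {J I : DyadicInterval} (h : J ≤ I) : J.len ≤ I.len := by
  rw [le_iff_ends] at h; linarith [h.1, h.2]

lemma n_le_of_le {J I : DyadicInterval} (h : J ≤ I) : J.n ≤ I.n := by
  have := len_le_of_le h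
  unfold len at this
  exact_mod_cast (zpow_le_zpow_iff_right₀ (by norm_num : (1:ℝ) < 2)).mp this

lemma n_inj {J I : DyadicInterval} (hJI : J ≤ I) (hIJ : I ≤ J) : J = I := by
  have hn : J.n = I.n := le_antisymm (n_le_of_le hJI) (n_le_of_le hIJ)
  rw [le_iff_ends] at hJI hIJ
  have hl : J.leftEnd = I.leftEnd := le_antisymm (by linarith [hIJ.1]) (by linarith [hJI.1])
  have hk : J.k = I.k := by
    have : (J.k : ℝ) * 2 ^ J.n = (I.k : ℝ) * 2 ^ I.n := hl
    rw [hn] at this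
    have h2 : (0:ℝ) < 2 ^ I.n := by positivity
    exact_mod_cast mul_right_cancel₀ (ne_of_gt h2) this
  cases J; cases I; simp_all

/-- key: endpoints of bigger-scale intervals are multiples of `2^m` for `m` smaller. -/
lemma nested {K L : DyadicInterval} (hn : K.n ≤ L.n)
    (hx : (K.toSet ∩ L.toSet).Nonempty) : K ≤ L := by
  obtain ⟨x, hxK, hxL⟩ := hx
  rw [toSet_eq] at hxK hxL
  set t : ℤ := L.k * 2 ^ (L.n - K.n).toNat with ht
  have hpow : ((2:ℝ) ^ (L.n - K.n).toNat) * 2 ^ K.n = 2 ^ L.n := by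
    rw [← zpow_natCast (2:ℝ) (L.n - K.n).toNat, ← zpow_add₀ (by norm_num : (2:ℝ) ≠ 0)]
    congr 1
    omega
  have htL : (t : ℝ) * 2 ^ K.n = L.leftEnd := by
    push_cast [ht, leftEnd]
    rw [mul_assoc, hpow]
  have hpos : (0:ℝ) < 2 ^ K.n := by positivity
  -- L.len = 2^(L.n - K.n).toNat * 2^K.n
  have hlenL : L.len = ((2:ℤ) ^ (L.n - K.n).toNat : ℤ) * 2 ^ K.n := by
    push_cast; rw [hpow]; rfl
  have h1 : L.leftEnd ≤ K.leftEnd := by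
    by_contra hcon
    push_neg at hcon
    -- K.leftEnd < L.leftEnd, endpoints multiples of 2^K.n ⇒ K.leftEnd + K.len ≤ L.leftEnd
    have hkt : (K.k : ℝ) < t := by
      have := hcon
      rw [← htL] at this
      exact lt_of_mul_lt_mul_right (by exact this) (le_of_lt hpos) |>.trans_le (le_refl _)
    have hkt' : K.k + 1 ≤ t := by exact_mod_cast hkt
    have : K.leftEnd + K.len ≤ L.leftEnd := by
      rw [← htL]
      unfold leftEnd len
      have : ((K.k : ℝ) + 1) * 2 ^ K.n ≤ (t : ℝ) * 2 ^ K.n := by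
        apply mul_le_mul_of_nonneg_right _ (le_of_lt hpos)
        exact_mod_cast hkt'
      linarith [this]
    -- but x ∈ K and x ∈ L : x < K.leftEnd + K.len ≤ L.leftEnd ≤ x
    linarith [hxK.2, hxL.1]
  have h2 : K.leftEnd + K.len ≤ L.leftEnd + L.len := by
    by_contra hcon
    push_neg at hcon
    -- L.leftEnd + L.len < K.leftEnd + K.len; both multiples of 2^K.n
    set t' : ℤ := t + 2 ^ (L.n - K.n).toNat with ht'
    have htR : (t' : ℝ) * 2 ^ K.n = L.leftEnd + L.len := by
      push_cast [ht']
      rw [add_mul, htL, hlenL]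
      push_cast
      ring
    have hkt : (t' : ℝ) < K.k + 1 := by
      have : (t':ℝ) * 2 ^ K.n < ((K.k:ℝ) + 1) * 2 ^ K.n := by
        rw [htR]; unfold leftEnd len at hcon ⊢; linarith
      exact lt_of_mul_lt_mul_right this (le_of_lt hpos)
    have hkt' : t' ≤ K.k := by exact_mod_cast Int.lt_add_one_iff.mp (by exact_mod_cast hkt)
    have : L.leftEnd + L.len ≤ K.leftEnd := by
      rw [← htR]
      unfold leftEnd
      apply mul_le_mul_of_nonneg_right _ (le_of_lt hpos)
      exact_mod_cast hkt'
    linarith [hxL.2, hxK.1]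
  rw [le_iff_ends]; exact ⟨h1, h2⟩

lemma left_n (I : DyadicInterval) : I.left.n = I.n - 1 := rfl
lemma right_n (I : DyadicInterval) : I.right.n = I.n - 1 := rfl

lemma half (I : DyadicInterval) : (2:ℝ) ^ (I.n - 1) = I.len / 2 := by
  unfold len
  rw [zpow_sub₀ (by norm_num : (2:ℝ) ≠ 0)]
  norm_num

lemma left_len (I : DyadicInterval) : I.left.len = I.len / 2 := half I
lemma right_len (I : DyadicInterval) : I.right.len = I.len / 2 := half I

lemma left_leftEnd (I : DyadicInterval) : I.left.leftEnd = I.leftEnd := by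
  unfold left leftEnd
  push_cast
  rw [half]
  unfold len
  ring

lemma right_leftEnd (I : DyadicInterval) : I.right.leftEnd = I.leftEnd + I.len / 2 := by
  unfold right leftEnd
  push_cast
  rw [half]
  unfold len
  ring

lemma left_toSet (I : DyadicInterval) :
    I.left.toSet = Set.Ico I.leftEnd (I.leftEnd + I.len / 2) := by
  rw [toSet_eq, left_leftEnd, left_len]

lemma right_toSet (I : DyadicInterval) :
    I.right.toSet = Set.Ico (I.leftEnd + I.len / 2) (I.leftEnd + I.len) := by
  rw [toSet_eq, right_leftEnd, right_len]; ring_nf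

lemma children_union (I : DyadicInterval) : I.left.toSet ∪ I.right.toSet = I.toSet := by
  rw [left_toSet, right_toSet, toSet_eq]
  exact Set.Ico_union_Ico_eq_Ico (by linarith [I.len_pos]) (by linarith [I.len_pos])

lemma children_disjoint (I : DyadicInterval) : Disjoint I.left.toSet I.right.toSet := by
  rw [left_toSet, right_toSet, Set.Ico_disjoint_Ico]
  simp

lemma left_le (I : DyadicInterval) : I.left ≤ I := by
  intro x hx
  rw [← children_union I]
  exact Or.inl hx

lemma right_le (I : DyadicInterval) : I.right ≤ I := by
  intro x hx
  rw [← children_union I]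
  exact Or.inr hx

lemma left_lt (I : DyadicInterval) : I.left < I := by
  rw [lt_def, Set.ssubset_iff_subset_ne]
  refine ⟨left_le I, fun h => ?_⟩
  have : I.leftEnd + I.len / 2 ∈ I.left.toSet := by
    rw [h, toSet_eq]; constructor <;> [linarith [I.len_pos]; linarith [I.len_pos]]
  rw [left_toSet] at this
  linarith [this.2]

lemma right_lt (I : DyadicInterval) : I.right < I := by
  rw [lt_def, Set.ssubset_iff_subset_ne]
  refine ⟨right_le I, fun h => ?_⟩
  have : I.leftEnd ∈ I.right.toSet := by rw [h]; exact I.leftEnd_mem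
  rw [right_toSet] at this
  linarith [this.1, I.len_pos]

lemma lt_iff_child {J I : DyadicInterval} : J < I ↔ J ≤ I.left ∨ J ≤ I.right := by
  constructor
  · intro h
    have hle : J ≤ I := le_of_lt' h
    have hn : J.n < I.n := by
      rcases lt_or_eq_of_le (n_le_of_le hle) with h' | h'
      · exact h'
      · exfalso
        have : I ≤ J := nested (le_of_eq h'.symm) (by
          rw [Set.inter_comm]
          exact J.nonempty.mono (Set.subset_inter (subset_refl _) hle))
        exact absurd (n_inj hle this)
          (fun he => (Set.ssubset_iff_subset_ne.mp (lt_def.mp h)).2 (by rw [he]))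
    have hn' : J.n ≤ I.left.n := by rw [left_n]; omega
    by_cases hint : (J.toSet ∩ I.left.toSet).Nonempty
    · exact Or.inl (nested hn' hint)
    · right
      refine nested (by rw [right_n]; omega) ?_
      obtain ⟨x, hx⟩ := J.nonempty
      refine ⟨x, hx, ?_⟩
      have hxI : x ∈ I.toSet := hle hx
      rw [← children_union] at hxI
      rcases hxI with h' | h'
      · exact absurd ⟨x, hx, h'⟩ hint
      · exact h'
  · rintro (h | h)
    · exact lt_of_le_of_lt' h (left_lt I)
    · exact lt_of_le_of_lt' h (right_lt I)

lemma not_le_both {J I : DyadicInterval} (hl : J ≤ I.left) (hr : J ≤ I.right) : False := by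
  obtain ⟨x, hx⟩ := J.nonempty
  exact (children_disjoint I).ne_of_mem (hl hx) (hr hx) rfl

lemma le_antisymm' {J I : DyadicInterval} (h1 : J ≤ I) (h2 : I ≤ J) : J = I := n_inj h1 h2

lemma haarVal_left {I J : DyadicInterval} (h : J ≤ I.left) :
    I.haarVal J = (Real.sqrt I.len)⁻¹ := by
  unfold haarVal haar
  have hmem : J.leftEnd ∈ I.left.toSet := h J.leftEnd_mem
  have hnot : J.leftEnd ∉ I.right.toSet := fun hc =>
    (children_disjoint I).ne_of_mem hmem hc rfl
  rw [Set.indicator_of_mem hmem, Set.indicator_of_notMem hnot]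
  ring

lemma haarVal_right {I J : DyadicInterval} (h : J ≤ I.right) :
    I.haarVal J = -(Real.sqrt I.len)⁻¹ := by
  unfold haarVal haar
  have hmem : J.leftEnd ∈ I.right.toSet := h J.leftEnd_mem
  have hnot : J.leftEnd ∉ I.left.toSet := fun hc =>
    (children_disjoint I).ne_of_mem hc hmem rfl
  rw [Set.indicator_of_mem hmem, Set.indicator_of_notMem hnot]
  ring



lemma le_of_le_of_ne_lt {J I : DyadicInterval} (h : J ≤ I) (hne : J ≠ I) : J < I :=
  lt_def.mpr (Set.ssubset_iff_subset_ne.mpr ⟨le_def.mp h,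
    fun he => hne (n_inj h (le_def.mpr (by rw [he])))⟩)

lemma eq_of_le_of_n_eq {J I : DyadicInterval} (h : J ≤ I) (hn : J.n = I.n) : J = I := by
  refine n_inj h (nested (le_of_eq hn.symm) ?_)
  rw [Set.inter_comm]
  exact J.nonempty.mono (Set.subset_inter (subset_refl _) h)

/-- helper to compare multiples of `2^m`. -/
lemma int_mul_le {a b m : ℤ} (h : (a:ℝ) * 2 ^ m ≤ (b:ℝ) * 2 ^ m) : a ≤ b := by
  have hpos : (0:ℝ) < 2 ^ m := by positivity
  exact_mod_cast le_of_mul_le_mul_right h hpos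

lemma levSet_finite (I : DyadicInterval) (m : ℤ) (hm : m ≤ I.n) :
    {K : DyadicInterval | K ≤ I ∧ K.n = m}.Finite := by
  set g : ℕ := (I.n - m).toNat with hg
  have hpow : ((2:ℝ) ^ g) * 2 ^ m = 2 ^ I.n := by
    rw [← zpow_natCast (2:ℝ) g, ← zpow_add₀ (by norm_num : (2:ℝ) ≠ 0)]
    congr 1
    omega
  have hsub : {K : DyadicInterval | K ≤ I ∧ K.n = m} ⊆
      (fun j => (⟨m, j⟩ : DyadicInterval)) '' (Set.Icc (I.k * 2 ^ g) ((I.k + 1) * 2 ^ g)) := by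
    rintro K ⟨hKI, hKn⟩
    rw [le_iff_ends] at hKI
    refine ⟨K.k, ⟨?_, ?_⟩, ?_⟩
    · apply int_mul_le (m := m)
      push_cast
      rw [mul_assoc, hpow]
      have := hKI.1
      unfold leftEnd at this
      rw [hKn] at this
      exact this
    · apply int_mul_le (m := m)
      push_cast
      rw [mul_assoc, hpow]
      have := hKI.2
      unfold leftEnd len at this
      rw [hKn] at this
      have hexp : ((I.k:ℝ) + 1) * 2 ^ I.n = (I.k:ℝ) * 2 ^ I.n + 2 ^ I.n := by ring
      have hp2 : (0:ℝ) < 2 ^ m := by positivity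
      rw [hexp]
      linarith
    · cases K; simp_all
  exact Set.Finite.subset (Set.Finite.image _ (Set.finite_Icc _ _)) hsub

/-- The finset of `K ≤ I` at depth `g`. -/
noncomputable def lev (I : DyadicInterval) (g : ℕ) : Finset DyadicInterval :=
  if hm : (I.n - g : ℤ) ≤ I.n then (levSet_finite I (I.n - g) hm).toFinset else ∅

lemma mem_lev {I K : DyadicInterval} {g : ℕ} :
    K ∈ lev I g ↔ K ≤ I ∧ K.n = I.n - g := by
  have hm : (I.n - g : ℤ) ≤ I.n := by omega
  rw [lev, dif_pos hm, Set.Finite.mem_toFinset]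
  rfl

lemma lev_zero (I : DyadicInterval) : lev I 0 = {I} := by
  ext K
  rw [mem_lev, Finset.mem_singleton]
  constructor
  · rintro ⟨h1, h2⟩; exact eq_of_le_of_n_eq h1 (by omega)
  · rintro rfl; exact ⟨le_refl' _, by omega⟩

lemma parent_exists (K : DyadicInterval) :
    ∃ p : DyadicInterval, (K = p.left ∨ K = p.right) ∧ p.n = K.n + 1 := by
  rcases Int.even_or_odd K.k with ⟨c, hc⟩ | ⟨c, hc⟩
  · refine ⟨⟨K.n + 1, c⟩, Or.inl ?_, rfl⟩
    cases K
    simp only [left, mk.injEq] at *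
    omega
  · refine ⟨⟨K.n + 1, c⟩, Or.inr ?_, rfl⟩
    cases K
    simp only [right, mk.injEq] at *
    omega

lemma left_ne_right (p q : DyadicInterval) : p.left ≠ q.right := by
  intro h
  have : (2 * p.k) = 2 * q.k + 1 := congrArg DyadicInterval.k h
  omega

lemma child_eq_parent_eq {p q : DyadicInterval}
    (h : p.left = q.left ∨ p.left = q.right ∨ p.right = q.left ∨ p.right = q.right) :
    p = q := by
  have hn : p.n = q.n := by
    rcases h with h | h | h | h <;>
    · have := congrArg DyadicInterval.n h
      simp only [left, right] at this
      omega
  -- children give common point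
  have hint : (p.toSet ∩ q.toSet).Nonempty := by
    rcases h with h | h | h | h
    · exact ⟨p.left.leftEnd, left_le p p.left.leftEnd_mem, h ▸ left_le q (h ▸ p.left.leftEnd_mem)⟩
    · exact ⟨p.left.leftEnd, left_le p p.left.leftEnd_mem, right_le q (h ▸ p.left.leftEnd_mem)⟩
    · exact ⟨p.right.leftEnd, right_le p p.right.leftEnd_mem, left_le q (h ▸ p.right.leftEnd_mem)⟩
    · exact ⟨p.right.leftEnd, right_le p p.right.leftEnd_mem, right_le q (h ▸ p.right.leftEnd_mem)⟩
  exact n_inj (nested (le_of_eq hn) hint) (nested (le_of_eq hn.symm) (Set.inter_comm _ _ ▸ hint))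

lemma lev_succ (I : DyadicInterval) (g : ℕ) :
    lev I (g + 1) = (lev I g).biUnion (fun K => {K.left, K.right}) := by
  ext K'
  rw [mem_lev, Finset.mem_biUnion]
  constructor
  · rintro ⟨hle, hn⟩
    obtain ⟨p, hp, hpn⟩ := parent_exists K'
    have hchild : K' ≤ p := by
      rcases hp with rfl | rfl
      · exact left_le p
      · exact right_le p
    have hpI : p ≤ I := by
      refine nested (by push_cast at hn; omega) ?_
      exact K'.nonempty.mono (Set.subset_inter hchild hle)
    refine ⟨p, mem_lev.mpr ⟨hpI, by push_cast at hn ⊢; omega⟩, ?_⟩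
    rcases hp with rfl | rfl
    · exact Finset.mem_insert_self _ _
    · exact Finset.mem_insert_of_mem (Finset.mem_singleton_self _)
  · rintro ⟨K, hK, hmem⟩
    rw [mem_lev] at hK
    rcases Finset.mem_insert.mp hmem with rfl | hmem'
    · exact ⟨le_trans' (left_le K) hK.1, by rw [left_n]; push_cast; omega⟩
    · rw [Finset.mem_singleton] at hmem'
      subst hmem'
      exact ⟨le_trans' (right_le K) hK.1, by rw [right_n]; push_cast; omega⟩


end DyadicInterval

/- ============ sum machinery ============ -/

open DyadicInterval

/-- The set of dyadic subintervals of `I`. -/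
def SubS (I : DyadicInterval) : Set DyadicInterval := {J | J ≤ I}

/-- Control of a sequence by a Carleson-type bound. -/
def Ctrl (β : DyadicInterval → ℝ) (KB : ℝ) : Prop :=
  0 ≤ KB ∧ ∀ L : DyadicInterval, Summable ((SubS L).indicator fun J => β J ^ 2) ∧
    ∑' J, (SubS L).indicator (fun J => β J ^ 2) J ≤ L.len * KB ^ 2

section Ctrl

variable {β δ : DyadicInterval → ℝ} {KB KD : ℝ}

lemma indicator_sq (S : Set DyadicInterval) (β : DyadicInterval → ℝ) :
    (S.indicator fun J => β J ^ 2) = fun J => (S.indicator β J) ^ 2 := by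
  funext J
  by_cases h : J ∈ S <;> simp [h]

/-- Cauchy–Schwarz for the controlled pair, over any `SubS L`. -/
lemma cs_bound (hβ : Ctrl β KB) (hδ : Ctrl δ KD) (L : DyadicInterval) :
    Summable ((SubS L).indicator fun J => |β J * δ J|) ∧
    ∑' J, (SubS L).indicator (fun J => |β J * δ J|) J ≤
      Real.sqrt (∑' J, (SubS L).indicator (fun J => β J ^ 2) J) *
      Real.sqrt (∑' J, (SubS L).indicator (fun J => δ J ^ 2) J) := by
  obtain ⟨-, hβ2⟩ := hβ
  obtain ⟨-, hδ2⟩ := hδ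
  obtain ⟨hβs, hβb⟩ := hβ2 L
  obtain ⟨hδs, hδb⟩ := hδ2 L
  have hnonneg : ∀ J, 0 ≤ (SubS L).indicator (fun J => |β J * δ J|) J := fun J =>
    Set.indicator_nonneg (fun x _ => abs_nonneg _) J
  have hsum : Summable ((SubS L).indicator fun J => |β J * δ J|) := by
    refine Summable.of_nonneg_of_le hnonneg ?_ ((hβs.add hδs).div_const 2)
    · intro J
      by_cases h : J ∈ SubS L
      · simp only [Set.indicator_of_mem h]
        nlinarith [sq_nonneg (|β J| - |δ J|), abs_mul (β J) (δ J), sq_abs (β J), sq_abs (δ J),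
          abs_nonneg (β J), abs_nonneg (δ J)]
      · simp [Set.indicator_of_notMem h]
  refine ⟨hsum, Summable.tsum_le_of_sum_le hsum ?_⟩
  intro F
  -- Cauchy–Schwarz on the finset F
  set u := (SubS L).indicator β
  set v := (SubS L).indicator δ
  have huv : ∀ J, (SubS L).indicator (fun J => |β J * δ J|) J = |u J| * |v J| := by
    intro J
    by_cases h : J ∈ SubS L <;> simp [u, v, h, abs_mul]
  have hsq : (∑ J ∈ F, |u J| * |v J|) ^ 2 ≤
      (∑ J ∈ F, |u J| ^ 2) * ∑ J ∈ F, |v J| ^ 2 :=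
    Finset.sum_mul_sq_le_sq_mul_sq F (fun J => |u J|) fun J => |v J|
  have hu2 : ∑ J ∈ F, |u J| ^ 2 ≤ ∑' J, (SubS L).indicator (fun J => β J ^ 2) J := by
    have he : ∀ J, |u J| ^ 2 = (SubS L).indicator (fun J => β J ^ 2) J := fun J => by
      by_cases h : J ∈ SubS L <;> simp [u, h, sq_abs]
    calc ∑ J ∈ F, |u J| ^ 2 = ∑ J ∈ F, (SubS L).indicator (fun J => β J ^ 2) J :=
          Finset.sum_congr rfl fun J _ => he J
      _ ≤ _ := Summable.sum_le_tsum F (fun J _ => Set.indicator_nonneg (fun x _ => sq_nonneg _) J) hβs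
  have hv2 : ∑ J ∈ F, |v J| ^ 2 ≤ ∑' J, (SubS L).indicator (fun J => δ J ^ 2) J := by
    have he : ∀ J, |v J| ^ 2 = (SubS L).indicator (fun J => δ J ^ 2) J := fun J => by
      by_cases h : J ∈ SubS L <;> simp [v, h, sq_abs]
    calc ∑ J ∈ F, |v J| ^ 2 = ∑ J ∈ F, (SubS L).indicator (fun J => δ J ^ 2) J :=
          Finset.sum_congr rfl fun J _ => he J
      _ ≤ _ := Summable.sum_le_tsum F (fun J _ => Set.indicator_nonneg (fun x _ => sq_nonneg _) J) hδs
  calc ∑ J ∈ F, (SubS L).indicator (fun J => |β J * δ J|) J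
      = ∑ J ∈ F, |u J| * |v J| := Finset.sum_congr rfl fun J _ => huv J
    _ = Real.sqrt ((∑ J ∈ F, |u J| * |v J|) ^ 2) :=
        (Real.sqrt_sq (Finset.sum_nonneg fun J _ => mul_nonneg (abs_nonneg _) (abs_nonneg _))).symm
    _ ≤ Real.sqrt ((∑' J, (SubS L).indicator (fun J => β J ^ 2) J) *
          ∑' J, (SubS L).indicator (fun J => δ J ^ 2) J) := by
        apply Real.sqrt_le_sqrt
        refine hsq.trans (mul_le_mul hu2 hv2 (Finset.sum_nonneg fun J _ => sq_nonneg _) ?_)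
        exact le_trans (Finset.sum_nonneg fun J _ => sq_nonneg _) hu2
    _ = _ := Real.sqrt_mul (tsum_nonneg fun J => Set.indicator_nonneg
        (fun x _ => sq_nonneg _) J) _

lemma abs_summable (hβ : Ctrl β KB) (hδ : Ctrl δ KD) (L : DyadicInterval) :
    Summable ((SubS L).indicator fun J => |β J * δ J|) := (cs_bound hβ hδ L).1

lemma abs_bound (hβ : Ctrl β KB) (hδ : Ctrl δ KD) (L : DyadicInterval) :
    ∑' J, (SubS L).indicator (fun J => |β J * δ J|) J ≤ L.len * (KB * KD) := by
  refine (cs_bound hβ hδ L).2.trans ?_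
  have h1 : Real.sqrt (∑' J, (SubS L).indicator (fun J => β J ^ 2) J) ≤
      Real.sqrt (L.len * KB ^ 2) := Real.sqrt_le_sqrt ((hβ.2 L).2)
  have h2 : Real.sqrt (∑' J, (SubS L).indicator (fun J => δ J ^ 2) J) ≤
      Real.sqrt (L.len * KD ^ 2) := Real.sqrt_le_sqrt ((hδ.2 L).2)
  have hn1 : 0 ≤ Real.sqrt (∑' J, (SubS L).indicator (fun J => β J ^ 2) J) := Real.sqrt_nonneg _
  calc _ ≤ Real.sqrt (L.len * KB ^ 2) * Real.sqrt (L.len * KD ^ 2) :=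
        mul_le_mul h1 h2 (Real.sqrt_nonneg _) (Real.sqrt_nonneg _)
    _ = Real.sqrt ((L.len * KB ^ 2) * (L.len * KD ^ 2)) :=
        (Real.sqrt_mul (mul_nonneg L.len_pos.le (sq_nonneg _)) _).symm
    _ = Real.sqrt ((L.len * (KB * KD)) ^ 2) := by ring_nf
    _ = L.len * (KB * KD) := Real.sqrt_sq (mul_nonneg L.len_pos.le (mul_nonneg hβ.1 hδ.1))

/-- The (absolutely convergent) sum of `β δ` over subintervals of `L`. -/
noncomputable def Af (β δ : DyadicInterval → ℝ) (L : DyadicInterval) : ℝ :=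
  ∑' J, (SubS L).indicator (schurR β δ) J

variable {β δ : DyadicInterval → ℝ} {KB KD : ℝ}

lemma indicator_abs (S : Set DyadicInterval) (f : DyadicInterval → ℝ) :
    (fun J => |S.indicator f J|) = S.indicator fun J => |f J| := by
  funext J
  by_cases h : J ∈ S <;> simp [h]

lemma schur_summable (hβ : Ctrl β KB) (hδ : Ctrl δ KD) (L : DyadicInterval) :
    Summable ((SubS L).indicator (schurR β δ)) := by
  rw [← summable_abs_iff, indicator_abs]
  exact abs_summable hβ hδ L

lemma Af_subtype (β δ : DyadicInterval → ℝ) (L : DyadicInterval) :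
    Af β δ L = ∑' J : {J : DyadicInterval // J ≤ L}, (schurR β δ) J.1 := by
  rw [Af, ← tsum_subtype]
  rfl

lemma Af_abs_le (hβ : Ctrl β KB) (hδ : Ctrl δ KD) (L : DyadicInterval) :
    |Af β δ L| ≤ L.len * (KB * KD) := by
  refine le_trans ?_ (abs_bound hβ hδ L)
  have hcong : ∀ J, ‖(SubS L).indicator (schurR β δ) J‖ =
      (SubS L).indicator (fun J => |β J * δ J|) J := fun J => by
    by_cases h : J ∈ SubS L <;> simp [h, schurR, abs_mul]
  have hs : Summable fun J => ‖(SubS L).indicator (schurR β δ) J‖ :=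
    (abs_summable hβ hδ L).congr fun J => (hcong J).symm
  have h := norm_tsum_le_tsum_norm hs
  rw [Real.norm_eq_abs] at h
  exact le_trans h (le_of_eq (tsum_congr hcong))

/-- decomposition of `{J | J ≤ K}` into `{K}`, subintervals of children. -/
lemma SubS_decomp (K : DyadicInterval) :
    SubS K = {K} ∪ (SubS K.left ∪ SubS K.right) := by
  ext J
  simp only [SubS, Set.mem_setOf_eq, Set.mem_union, Set.mem_singleton_iff]
  constructor
  · intro h
    by_cases hJ : J = K
    · exact Or.inl hJ
    · exact Or.inr (lt_iff_child.mp (le_of_le_of_ne_lt h hJ))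
  · rintro (rfl | h | h)
    · exact le_refl' J
    · exact le_trans' h (left_le K)
    · exact le_trans' h (right_le K)

lemma not_left_self (K : DyadicInterval) : ¬ K ≤ K.left := fun h => by
  have := len_le_of_le h
  rw [left_len] at this
  linarith [K.len_pos]

lemma not_right_self (K : DyadicInterval) : ¬ K ≤ K.right := fun h => by
  have := len_le_of_le h
  rw [right_len] at this
  linarith [K.len_pos]

lemma not_left_of_right {J K : DyadicInterval} (h : J ≤ K.right) : ¬ J ≤ K.left :=
  fun h' => not_le_both h' h

/-- pointwise additive decomposition of the indicator on `SubS K`. -/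
lemma indicator_SubS_decomp (K : DyadicInterval) (f : DyadicInterval → ℝ) (J : DyadicInterval) :
    (SubS K).indicator f J = ({K} : Set DyadicInterval).indicator f J
      + (SubS K.left).indicator f J + (SubS K.right).indicator f J := by
  by_cases h : J ∈ SubS K
  · rw [Set.indicator_of_mem h]
    rw [SubS_decomp] at h
    rcases h with h1 | h1 | h1
    · rw [Set.mem_singleton_iff] at h1
      subst h1
      rw [Set.indicator_of_mem (Set.mem_singleton J), Set.indicator_of_notMem (show J ∉ SubS J.left from not_left_self J),
        Set.indicator_of_notMem (show J ∉ SubS J.right from not_right_self J)]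
      ring
    · have hKne : J ≠ K := fun he => not_left_self K (he ▸ h1)
      rw [Set.indicator_of_mem h1, Set.indicator_of_notMem (by simpa using hKne),
        Set.indicator_of_notMem (show J ∉ SubS K.right from fun h2 => not_le_both (I := K) h1 h2)]
      ring
    · have hKne : J ≠ K := fun he => not_right_self K (he ▸ h1)
      rw [Set.indicator_of_mem h1, Set.indicator_of_notMem (by simpa using hKne),
        Set.indicator_of_notMem (show J ∉ SubS K.left from fun h2 => not_le_both (I := K) h2 h1)]
      ring
  · have h1 : J ∉ ({K} : Set DyadicInterval) := fun hc => h (by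
      rw [Set.mem_singleton_iff] at hc; subst hc; exact le_refl' J)
    have h2 : J ∉ SubS K.left := fun hc => h (le_trans' hc (left_le K))
    have h3 : J ∉ SubS K.right := fun hc => h (le_trans' hc (right_le K))
    rw [Set.indicator_of_notMem h, Set.indicator_of_notMem h1,
      Set.indicator_of_notMem h2, Set.indicator_of_notMem h3]
    ring

lemma Af_split (hβ : Ctrl β KB) (hδ : Ctrl δ KD) (K : DyadicInterval) :
    Af β δ K = β K * δ K + Af β δ K.left + Af β δ K.right := by
  have hsing : Summable (({K} : Set DyadicInterval).indicator (schurR β δ)) := by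
    refine summable_of_ne_finset_zero (s := {K}) fun J hJ => ?_
    exact Set.indicator_of_notMem (by simpa using hJ) _
  have h1 : ∑' J, ({K} : Set DyadicInterval).indicator (schurR β δ) J = β K * δ K := by
    rw [tsum_eq_single K]
    · simp [schurR]
    · intro J hJ
      exact Set.indicator_of_notMem (by simpa using hJ) _
  calc Af β δ K = ∑' J, (({K} : Set DyadicInterval).indicator (schurR β δ) J
        + (SubS K.left).indicator (schurR β δ) J + (SubS K.right).indicator (schurR β δ) J) :=
        tsum_congr fun J => indicator_SubS_decomp K _ J
    _ = β K * δ K + Af β δ K.left + Af β δ K.right := by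
        rw [Summable.tsum_add (hsing.add (schur_summable hβ hδ K.left)) (schur_summable hβ hδ K.right),
          Summable.tsum_add hsing (schur_summable hβ hδ K.left), h1]
        rfl

lemma sweep_eq (hβ : Ctrl β KB) (hδ : Ctrl δ KD) (K : DyadicInterval) :
    sweepR (schurR β δ) K =
      (Real.sqrt K.len)⁻¹ * (Af β δ K.left - Af β δ K.right) := by
  set c := (Real.sqrt K.len)⁻¹ with hc
  have hbridge : sweepR (schurR β δ) K = ∑' J, ({J | J < K} : Set DyadicInterval).indicator
      (fun J => schurR β δ J * K.haarVal J) J := by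
    rw [sweepR, ← tsum_subtype]
    rfl
  have hptw : ∀ J, ({J | J < K} : Set DyadicInterval).indicator
      (fun J => schurR β δ J * K.haarVal J) J
      = (SubS K.left).indicator (schurR β δ) J * c
        + (SubS K.right).indicator (schurR β δ) J * (-c) := by
    intro J
    by_cases hl : J ∈ SubS K.left
    · have hlt : J < K := lt_iff_child.mpr (Or.inl hl)
      have hr : J ∉ SubS K.right := fun h2 => not_le_both (I := K) hl h2
      rw [Set.indicator_of_mem (show J ∈ {J | J < K} from hlt),
        Set.indicator_of_mem hl, Set.indicator_of_notMem hr, haarVal_left hl]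
      ring
    · by_cases hr : J ∈ SubS K.right
      · have hlt : J < K := lt_iff_child.mpr (Or.inr hr)
        rw [Set.indicator_of_mem (show J ∈ {J | J < K} from hlt),
          Set.indicator_of_mem hr, Set.indicator_of_notMem hl, haarVal_right hr]
        ring
      · have hlt : J ∉ {J | J < K} := fun h => by
          rcases lt_iff_child.mp h with h' | h'
          · exact hl h'
          · exact hr h'
        rw [Set.indicator_of_notMem hlt, Set.indicator_of_notMem hl,
          Set.indicator_of_notMem hr]
        ring
  rw [hbridge, tsum_congr hptw,
    Summable.tsum_add ((schur_summable hβ hδ K.left).mul_right c)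
      ((schur_summable hβ hδ K.right).mul_right (-c)),
    tsum_mul_right, tsum_mul_right]
  show Af β δ K.left * c + Af β δ K.right * (-c) = c * (Af β δ K.left - Af β δ K.right)
  ring

lemma sweep_sq_le (hβ : Ctrl β KB) (hδ : Ctrl δ KD) (K : DyadicInterval) :
    sweepR (schurR β δ) K ^ 2 ≤
      (Af β δ K.left ^ 2 / K.left.len + Af β δ K.right ^ 2 / K.right.len)
        - Af β δ K ^ 2 / K.len + 2 * |β K * δ K| * (KB * KD) := by
  have hl := K.len_pos
  have hln : K.len ≠ 0 := hl.ne'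
  have hcsq : ((Real.sqrt K.len)⁻¹) ^ 2 = K.len⁻¹ := by
    rw [← Real.sqrt_inv, Real.sq_sqrt (inv_nonneg.mpr hl.le)]
  set x := Af β δ K.left with hx
  set y := Af β δ K.right with hy
  set A := Af β δ K with hA'
  set aK := β K * δ K with haK
  have hsplit : A = aK + x + y := Af_split hβ hδ K
  have hAa : |A| ≤ K.len * (KB * KD) := Af_abs_le hβ hδ K
  rw [sweep_eq hβ hδ K, mul_pow, hcsq, left_len, right_len]
  have e1 : K.len⁻¹ * (x - y) ^ 2
      = x ^ 2 / (K.len / 2) + y ^ 2 / (K.len / 2) - (x + y) ^ 2 / K.len := by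
    field_simp
    ring
  rw [e1]
  have e3 : A ^ 2 / K.len - 2 * |aK| * (KB * KD) ≤ (x + y) ^ 2 / K.len := by
    have hxyA : x + y = A - aK := by rw [hsplit]; ring
    have hnum : A ^ 2 - 2 * |aK| * (K.len * (KB * KD)) ≤ (x + y) ^ 2 := by
      rw [hxyA]
      have hexp : (A - aK) ^ 2 = A ^ 2 - 2 * (aK * A) + aK ^ 2 := by ring
      have h1' : aK * A ≤ |aK| * |A| := (le_abs_self _).trans_eq (abs_mul aK A)
      have h2 : |aK| * |A| ≤ |aK| * (K.len * (KB * KD)) :=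
        mul_le_mul_of_nonneg_left hAa (abs_nonneg aK)
      nlinarith [sq_nonneg aK]
    calc A ^ 2 / K.len - 2 * |aK| * (KB * KD)
        = (A ^ 2 - 2 * |aK| * (K.len * (KB * KD))) / K.len := by
          field_simp
      _ ≤ (x + y) ^ 2 / K.len := (div_le_div_iff_of_pos_right hl).mpr hnum
  linarith

open Finset in
lemma lev_sum_children (I : DyadicInterval) (g : ℕ) (F : DyadicInterval → ℝ) :
    ∑ K' ∈ lev I (g + 1), F K' = ∑ K ∈ lev I g, (F K.left + F K.right) := by
  rw [lev_succ]
  rw [Finset.sum_biUnion ?hd]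
  · exact Finset.sum_congr rfl fun K _ => Finset.sum_pair (left_ne_right K K)
  case hd =>
    intro K₁ h₁ K₂ h₂ hne
    simp only [Finset.disjoint_left]
    intro c hc1 hc2
    apply hne
    simp only [Finset.mem_insert, Finset.mem_singleton] at hc1 hc2
    apply child_eq_parent_eq
    rcases hc1 with rfl | rfl <;> rcases hc2 with h | h <;> tauto

lemma lev_unique {I K₁ K₂ J : DyadicInterval} {g : ℕ} (h₁ : K₁ ∈ lev I g) (h₂ : K₂ ∈ lev I g)
    (hJ₁ : J ≤ K₁) (hJ₂ : J ≤ K₂) : K₁ = K₂ := by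
  rw [mem_lev] at h₁ h₂
  have hn : K₁.n = K₂.n := by omega
  have hint : (K₁.toSet ∩ K₂.toSet).Nonempty :=
    J.nonempty.mono (Set.subset_inter hJ₁ hJ₂)
  exact n_inj (nested (le_of_eq hn) hint) (nested (le_of_eq hn.symm) (Set.inter_comm _ _ ▸ hint))

lemma lev_tsum_le (I : DyadicInterval) (g : ℕ) (f : DyadicInterval → ℝ)
    (hf : ∀ J, 0 ≤ f J) (hsum : ∀ L, Summable ((SubS L).indicator f)) :
    ∑ K ∈ lev I g, ∑' J, (SubS K).indicator f J ≤ ∑' J, (SubS I).indicator f J := by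
  rw [← Summable.tsum_finsetSum (fun K _ => hsum K)]
  refine Summable.tsum_le_tsum ?_ (summable_sum fun K _ => hsum K) (hsum I)
  intro J
  by_cases hex : ∃ K₀ ∈ lev I g, J ∈ SubS K₀
  · obtain ⟨K₀, hK₀, hJK₀⟩ := hex
    rw [Finset.sum_eq_single_of_mem K₀ hK₀ ?h]
    · rw [Set.indicator_of_mem hJK₀, Set.indicator_of_mem
        (show J ∈ SubS I from le_trans' hJK₀ (mem_lev.mp hK₀).1)]
    case h =>
      intro K hK hne
      refine Set.indicator_of_notMem (fun hc => hne ?_) _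
      exact lev_unique hK hK₀ hc hJK₀
  · push_neg at hex
    have : ∀ K ∈ lev I g, (SubS K).indicator f J = 0 := fun K hK =>
      Set.indicator_of_notMem (hex K hK) _
    rw [Finset.sum_congr rfl this, Finset.sum_const, smul_zero]
    exact Set.indicator_nonneg (fun x _ => hf x) J

noncomputable def Phi (β δ : DyadicInterval → ℝ) (I : DyadicInterval) (g : ℕ) : ℝ :=
  ∑ K ∈ lev I g, Af β δ K ^ 2 / K.len

lemma Phi_nonneg (β δ : DyadicInterval → ℝ) (I : DyadicInterval) (g : ℕ) :
    0 ≤ Phi β δ I g :=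
  Finset.sum_nonneg fun K _ => div_nonneg (sq_nonneg _) K.len_pos.le

lemma lev_step (hβ : Ctrl β KB) (hδ : Ctrl δ KD) (I : DyadicInterval) (g : ℕ) :
    ∑ K ∈ lev I g, sweepR (schurR β δ) K ^ 2 ≤
      Phi β δ I (g + 1) - Phi β δ I g
        + 2 * (KB * KD) * ∑ K ∈ lev I g, |β K * δ K| := by
  have h1 : ∑ K ∈ lev I g, sweepR (schurR β δ) K ^ 2 ≤
      ∑ K ∈ lev I g, ((Af β δ K.left ^ 2 / K.left.len + Af β δ K.right ^ 2 / K.right.len)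
        - Af β δ K ^ 2 / K.len + 2 * |β K * δ K| * (KB * KD)) :=
    Finset.sum_le_sum fun K _ => sweep_sq_le hβ hδ K
  refine h1.trans (le_of_eq ?_)
  rw [Phi, Phi, lev_sum_children I g (fun K => Af β δ K ^ 2 / K.len), Finset.mul_sum]
  rw [← Finset.sum_sub_distrib, ← Finset.sum_add_distrib]
  exact Finset.sum_congr rfl fun K _ => by ring

lemma Phi_le (hβ : Ctrl β KB) (hδ : Ctrl δ KD) (I : DyadicInterval) (g : ℕ) :
    Phi β δ I g ≤ KB ^ 2 * (I.len * KD ^ 2) := by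
  have hper : ∀ K ∈ lev I g, Af β δ K ^ 2 / K.len ≤
      KB ^ 2 * ∑' J, (SubS K).indicator (fun J => δ J ^ 2) J := by
    intro K _
    have hcs := (cs_bound hβ hδ K).2
    have habs : |Af β δ K| ≤ ∑' J, (SubS K).indicator (fun J => |β J * δ J|) J := by
      have hcong : ∀ J, ‖(SubS K).indicator (schurR β δ) J‖ =
          (SubS K).indicator (fun J => |β J * δ J|) J := fun J => by
        by_cases h : J ∈ SubS K <;> simp [h, schurR, abs_mul]
      have hs : Summable fun J => ‖(SubS K).indicator (schurR β δ) J‖ :=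
        (abs_summable hβ hδ K).congr fun J => (hcong J).symm
      have h := norm_tsum_le_tsum_norm hs
      rw [Real.norm_eq_abs] at h
      exact le_trans h (le_of_eq (tsum_congr hcong))
    set Bs := ∑' J, (SubS K).indicator (fun J => β J ^ 2) J with hBs
    set Ds := ∑' J, (SubS K).indicator (fun J => δ J ^ 2) J with hDs
    have hBs0 : 0 ≤ Bs := tsum_nonneg fun J => Set.indicator_nonneg (fun x _ => sq_nonneg _) J
    have hDs0 : 0 ≤ Ds := tsum_nonneg fun J => Set.indicator_nonneg (fun x _ => sq_nonneg _) J
    have hsq : Af β δ K ^ 2 ≤ Bs * Ds := by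
      have h1 : |Af β δ K| ≤ Real.sqrt Bs * Real.sqrt Ds := habs.trans hcs
      have h2 : Af β δ K ^ 2 = |Af β δ K| ^ 2 := (sq_abs _).symm
      rw [h2]
      calc |Af β δ K| ^ 2 ≤ (Real.sqrt Bs * Real.sqrt Ds) ^ 2 := by
            exact pow_le_pow_left₀ (abs_nonneg _) h1 2
        _ = Bs * Ds := by
            rw [mul_pow, Real.sq_sqrt hBs0, Real.sq_sqrt hDs0]
    have hBsb : Bs ≤ K.len * KB ^ 2 := (hβ.2 K).2
    rw [div_le_iff₀ K.len_pos]
    calc Af β δ K ^ 2 ≤ Bs * Ds := hsq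
      _ ≤ (K.len * KB ^ 2) * Ds := mul_le_mul_of_nonneg_right hBsb hDs0
      _ = KB ^ 2 * Ds * K.len := by ring
  calc Phi β δ I g ≤ ∑ K ∈ lev I g, KB ^ 2 * ∑' J, (SubS K).indicator (fun J => δ J ^ 2) J :=
        Finset.sum_le_sum hper
    _ = KB ^ 2 * ∑ K ∈ lev I g, ∑' J, (SubS K).indicator (fun J => δ J ^ 2) J := by
        rw [Finset.mul_sum]
    _ ≤ KB ^ 2 * ∑' J, (SubS I).indicator (fun J => δ J ^ 2) J := by
        refine mul_le_mul_of_nonneg_left ?_ (sq_nonneg KB)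
        exact lev_tsum_le I g _ (fun J => sq_nonneg _) (fun L => (hδ.2 L).1)
    _ ≤ KB ^ 2 * (I.len * KD ^ 2) :=
        mul_le_mul_of_nonneg_left (hδ.2 I).2 (sq_nonneg KB)

lemma lev_disjoint (I : DyadicInterval) : ∀ g₁ g₂ : ℕ, g₁ ≠ g₂ →
    Disjoint (lev I g₁) (lev I g₂) := by
  intro g₁ g₂ hne
  simp only [Finset.disjoint_left]
  intro K h1 h2
  rw [mem_lev] at h1 h2
  omega

open Finset in
lemma abs_schur_level_sum (hβ : Ctrl β KB) (hδ : Ctrl δ KD) (I : DyadicInterval) (M : ℕ) :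
    ∑ g ∈ Finset.range M, ∑ K ∈ lev I g, |β K * δ K| ≤ I.len * (KB * KD) := by
  have hdisj : ∀ g₁ ∈ Finset.range M, ∀ g₂ ∈ Finset.range M, g₁ ≠ g₂ →
      Disjoint (lev I g₁) (lev I g₂) := fun g₁ _ g₂ _ h => lev_disjoint I g₁ g₂ h
  rw [← Finset.sum_biUnion hdisj]
  set U := (Finset.range M).biUnion (lev I) with hU
  have hmem : ∀ K ∈ U, K ≤ I := by
    intro K hK
    rw [hU, Finset.mem_biUnion] at hK
    obtain ⟨g, -, hKg⟩ := hK
    exact (mem_lev.mp hKg).1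
  calc ∑ K ∈ U, |β K * δ K|
      = ∑ K ∈ U, (SubS I).indicator (fun J => |β J * δ J|) K :=
        Finset.sum_congr rfl fun K hK => by
          rw [Set.indicator_of_mem (show K ∈ SubS I from hmem K hK)]
    _ ≤ ∑' J, (SubS I).indicator (fun J => |β J * δ J|) J :=
        Summable.sum_le_tsum U (fun K _ => Set.indicator_nonneg (fun x _ => abs_nonneg _) K)
          (abs_summable hβ hδ I)
    _ ≤ I.len * (KB * KD) := abs_bound hβ hδ I

lemma level_sweep_bound (hβ : Ctrl β KB) (hδ : Ctrl δ KD) (I : DyadicInterval) (M : ℕ) :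
    ∑ g ∈ Finset.range M, ∑ K ∈ lev I g, sweepR (schurR β δ) K ^ 2 ≤
      3 * (I.len * (KB ^ 2 * KD ^ 2)) := by
  have tele : ∑ g ∈ Finset.range M, (Phi β δ I (g + 1) - Phi β δ I g)
      = Phi β δ I M - Phi β δ I 0 := Finset.sum_range_sub (Phi β δ I) M
  calc ∑ g ∈ Finset.range M, ∑ K ∈ lev I g, sweepR (schurR β δ) K ^ 2
      ≤ ∑ g ∈ Finset.range M, (Phi β δ I (g + 1) - Phi β δ I g
          + 2 * (KB * KD) * ∑ K ∈ lev I g, |β K * δ K|) :=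
        Finset.sum_le_sum fun g _ => lev_step hβ hδ I g
    _ = (Phi β δ I M - Phi β δ I 0)
          + 2 * (KB * KD) * ∑ g ∈ Finset.range M, ∑ K ∈ lev I g, |β K * δ K| := by
        rw [Finset.sum_add_distrib, tele, Finset.mul_sum]
    _ ≤ KB ^ 2 * (I.len * KD ^ 2)
          + 2 * (KB * KD) * (I.len * (KB * KD)) := by
        have h1 := Phi_le hβ hδ I M
        have h2 := Phi_nonneg β δ I 0
        have h3 := abs_schur_level_sum hβ hδ I M
        have h4 : 0 ≤ 2 * (KB * KD) := by
          have := mul_nonneg hβ.1 hδ.1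
          linarith
        have h5 := mul_le_mul_of_nonneg_left h3 h4
        linarith
    _ = 3 * (I.len * (KB ^ 2 * KD ^ 2)) := by ring

open Finset in
lemma finset_sweep_bound (hβ : Ctrl β KB) (hδ : Ctrl δ KD) (I : DyadicInterval)
    (F : Finset {K : DyadicInterval // K ≤ I}) :
    ∑ K ∈ F, sweepR (schurR β δ) K.1 ^ 2 ≤ 3 * (I.len * (KB ^ 2 * KD ^ 2)) := by
  set M : ℕ := F.sup (fun K => (I.n - K.1.n).toNat) + 1 with hM
  set U := (Finset.range M).biUnion (lev I) with hU
  have himg : F.image Subtype.val ⊆ U := by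
    intro K hK
    rw [Finset.mem_image] at hK
    obtain ⟨K', hK', rfl⟩ := hK
    rw [hU, Finset.mem_biUnion]
    refine ⟨(I.n - K'.1.n).toNat, ?_, ?_⟩
    · rw [Finset.mem_range, hM]
      exact Nat.lt_succ_of_le (Finset.le_sup (f := fun K : {K : DyadicInterval // K ≤ I} => (I.n - K.1.n).toNat) hK')
    · rw [mem_lev]
      have hn := n_le_of_le K'.2
      exact ⟨K'.2, by omega⟩
  calc ∑ K ∈ F, sweepR (schurR β δ) K.1 ^ 2
      = ∑ K' ∈ F.image Subtype.val, sweepR (schurR β δ) K' ^ 2 := by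
        rw [Finset.sum_image fun a _ b _ h => Subtype.ext h]
    _ ≤ ∑ K' ∈ U, sweepR (schurR β δ) K' ^ 2 :=
        Finset.sum_le_sum_of_subset_of_nonneg himg fun K _ _ => sq_nonneg _
    _ = ∑ g ∈ Finset.range M, ∑ K ∈ lev I g, sweepR (schurR β δ) K ^ 2 :=
        Finset.sum_biUnion fun g₁ _ g₂ _ h => lev_disjoint I g₁ g₂ h
    _ ≤ 3 * (I.len * (KB ^ 2 * KD ^ 2)) := level_sweep_bound hβ hδ I M

lemma ctrl_of_CM {β : DyadicInterval → ℝ} (hB : CMnormR β ≠ ⊤) :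
    Ctrl β (CMnormR β).toReal := by
  refine ⟨ENNReal.toReal_nonneg, fun L => ?_⟩
  set T := ∑' J : {J : DyadicInterval // J ≤ L}, ENNReal.ofReal (|β J.1| ^ 2) with hT
  have h : (ENNReal.ofReal L.len⁻¹ * T) ^ (1 / 2 : ℝ) ≤ CMnormR β :=
    le_iSup (fun I => (ENNReal.ofReal I.len⁻¹ *
      ∑' J : {J : DyadicInterval // J ≤ I}, ENNReal.ofReal (|β J.1| ^ 2)) ^ (1 / 2 : ℝ)) L
  have hX : ENNReal.ofReal L.len⁻¹ * T ≤ CMnormR β ^ (2 : ℝ) := by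
    have h2 := ENNReal.rpow_le_rpow h (by norm_num : (0:ℝ) ≤ 2)
    rwa [← ENNReal.rpow_mul, one_div, inv_mul_cancel₀ (two_ne_zero), ENNReal.rpow_one] at h2
  have hTle : T ≤ ENNReal.ofReal L.len * CMnormR β ^ (2 : ℝ) := by
    have he : ENNReal.ofReal L.len * ENNReal.ofReal L.len⁻¹ = 1 := by
      rw [← ENNReal.ofReal_mul L.len_pos.le, mul_inv_cancel₀ L.len_pos.ne',
        ENNReal.ofReal_one]
    calc T = (ENNReal.ofReal L.len * ENNReal.ofReal L.len⁻¹) * T := by rw [he, one_mul]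
      _ = ENNReal.ofReal L.len * (ENNReal.ofReal L.len⁻¹ * T) := by ring
      _ ≤ _ := mul_le_mul_right hX _
  have hR : ENNReal.ofReal L.len * CMnormR β ^ (2 : ℝ) ≠ ⊤ :=
    ENNReal.mul_ne_top ENNReal.ofReal_ne_top (ENNReal.rpow_ne_top_of_nonneg (by norm_num) hB)
  have hTt : T ≠ ⊤ := fun hc => hR (top_le_iff.mp (hc ▸ hTle))
  have hsub : Summable fun J : {J : DyadicInterval // J ≤ L} => β J.1 ^ 2 := by
    have hs := ENNReal.summable_toReal hTt
    refine hs.congr fun J => ?_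
    rw [ENNReal.toReal_ofReal (by positivity), sq_abs]
  have hsummable : Summable ((SubS L).indicator fun J => β J ^ 2) :=
    summable_subtype_iff_indicator.mp hsub
  refine ⟨hsummable, ?_⟩
  have h1 : ∑' J, (SubS L).indicator (fun J => β J ^ 2) J
      = ∑' J : {J : DyadicInterval // J ≤ L}, β J.1 ^ 2 := (tsum_subtype _ _).symm
  have h2 : ∑' J : {J : DyadicInterval // J ≤ L}, β J.1 ^ 2 = T.toReal := by
    rw [hT, ENNReal.tsum_toReal_eq fun J => ENNReal.ofReal_ne_top]
    exact tsum_congr fun J => by rw [ENNReal.toReal_ofReal (by positivity), sq_abs]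
  rw [h1, h2]
  calc T.toReal ≤ (ENNReal.ofReal L.len * CMnormR β ^ (2 : ℝ)).toReal :=
        ENNReal.toReal_mono hR hTle
    _ = L.len * (CMnormR β).toReal ^ 2 := by
        rw [ENNReal.toReal_mul, ENNReal.toReal_ofReal L.len_pos.le, ← ENNReal.toReal_rpow]
        norm_num

lemma sweep_CM_le (hβ : Ctrl β KB) (hδ : Ctrl δ KD) :
    CMnormR (sweepR (schurR β δ)) ≤ ENNReal.ofReal (2 * (KB * KD)) := by
  refine iSup_le fun I => ?_
  set a := schurR β δ
  have hT : (∑' K : {K : DyadicInterval // K ≤ I}, ENNReal.ofReal (|sweepR a K.1| ^ 2))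
      ≤ ENNReal.ofReal (3 * (I.len * (KB ^ 2 * KD ^ 2))) := by
    rw [ENNReal.tsum_eq_iSup_sum]
    refine iSup_le fun F => ?_
    rw [← ENNReal.ofReal_sum_of_nonneg fun K _ => by positivity]
    refine ENNReal.ofReal_le_ofReal ?_
    calc ∑ K ∈ F, |sweepR a K.1| ^ 2 = ∑ K ∈ F, sweepR a K.1 ^ 2 :=
          Finset.sum_congr rfl fun K _ => sq_abs _
      _ ≤ 3 * (I.len * (KB ^ 2 * KD ^ 2)) := finset_sweep_bound hβ hδ I F
  have hmul : ENNReal.ofReal I.len⁻¹ *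
      (∑' K : {K : DyadicInterval // K ≤ I}, ENNReal.ofReal (|sweepR a K.1| ^ 2))
      ≤ ENNReal.ofReal (3 * (KB ^ 2 * KD ^ 2)) := by
    calc _ ≤ ENNReal.ofReal I.len⁻¹ * ENNReal.ofReal (3 * (I.len * (KB ^ 2 * KD ^ 2))) :=
          mul_le_mul_right hT _
      _ = ENNReal.ofReal (I.len⁻¹ * (3 * (I.len * (KB ^ 2 * KD ^ 2)))) :=
          (ENNReal.ofReal_mul (inv_nonneg.mpr I.len_pos.le)).symm
      _ = ENNReal.ofReal (3 * (KB ^ 2 * KD ^ 2)) := by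
          congr 1
          have hln : I.len ≠ 0 := I.len_pos.ne'
          field_simp
  calc _ ≤ (ENNReal.ofReal (3 * (KB ^ 2 * KD ^ 2))) ^ (1 / 2 : ℝ) :=
        ENNReal.rpow_le_rpow hmul (by norm_num)
    _ = ENNReal.ofReal ((3 * (KB ^ 2 * KD ^ 2)) ^ (1 / 2 : ℝ)) :=
        ENNReal.ofReal_rpow_of_nonneg (by positivity) (by norm_num)
    _ ≤ ENNReal.ofReal (2 * (KB * KD)) := by
        refine ENNReal.ofReal_le_ofReal ?_
        rw [← Real.sqrt_eq_rpow]
        have h1 : (3 * (KB ^ 2 * KD ^ 2) : ℝ) ≤ (2 * (KB * KD)) ^ 2 := by nlinarith [sq_nonneg (KB * KD)]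
        calc Real.sqrt (3 * (KB ^ 2 * KD ^ 2)) ≤ Real.sqrt ((2 * (KB * KD)) ^ 2) :=
              Real.sqrt_le_sqrt h1
          _ = 2 * (KB * KD) := Real.sqrt_sq (by
                have := mul_nonneg hβ.1 hδ.1
                linarith)

lemma E_linf_le (hβ : Ctrl β KB) (hδ : Ctrl δ KD) :
    linftyNormR (EseqR (schurR β δ)) ≤ ENNReal.ofReal (KB * KD) := by
  refine iSup_le fun I => ?_
  refine ENNReal.ofReal_le_ofReal ?_
  have hE : EseqR (schurR β δ) I = I.len⁻¹ * Af β δ I := by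
    rw [EseqR, ← Af_subtype]
  rw [hE, abs_mul, abs_of_pos (inv_pos.mpr I.len_pos)]
  calc I.len⁻¹ * |Af β δ I| ≤ I.len⁻¹ * (I.len * (KB * KD)) :=
        mul_le_mul_of_nonneg_left (Af_abs_le hβ hδ I) (inv_nonneg.mpr I.len_pos.le)
    _ = KB * KD := by
        rw [← mul_assoc, inv_mul_cancel₀ I.len_pos.ne', one_mul]

lemma seq_zero_of_CM_zero {β : DyadicInterval → ℝ} (h : CMnormR β = 0) (J : DyadicInterval) :
    β J = 0 := by
  have h1 : (ENNReal.ofReal J.len⁻¹ *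
      ∑' K : {K : DyadicInterval // K ≤ J}, ENNReal.ofReal (|β K.1| ^ 2)) ^ (1 / 2 : ℝ) = 0 := by
    refine le_antisymm ?_ (zero_le)
    rw [← h]
    exact le_iSup (fun I => (ENNReal.ofReal I.len⁻¹ *
      ∑' K : {K : DyadicInterval // K ≤ I}, ENNReal.ofReal (|β K.1| ^ 2)) ^ (1 / 2 : ℝ)) J
  rw [ENNReal.rpow_eq_zero_iff] at h1
  rcases h1 with ⟨h1, -⟩ | ⟨h1, h2⟩
  · rcases mul_eq_zero.mp h1 with h2 | h2
    · exact absurd h2 (by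
        simp only [ENNReal.ofReal_eq_zero, not_le]
        exact inv_pos.mpr J.len_pos)
    · have h3 : ENNReal.ofReal (|β J| ^ 2) = 0 := by
        refine le_antisymm ?_ (zero_le)
        rw [← h2]
        exact ENNReal.le_tsum (⟨J, DyadicInterval.le_refl' J⟩ : {K : DyadicInterval // K ≤ J})
      rw [ENNReal.ofReal_eq_zero] at h3
      have h4 : |β J| = 0 := by nlinarith [abs_nonneg (β J), sq_nonneg (|β J|)]
      exact abs_eq_zero.mp h4
  · norm_num at h2

lemma CM_of_zero {a : DyadicInterval → ℝ} (h : ∀ I, a I = 0) : CMnormR a = 0 := by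
  refine le_antisymm (iSup_le fun I => ?_) (zero_le)
  have h1 : ∑' J : {J : DyadicInterval // J ≤ I}, ENNReal.ofReal (|a J.1| ^ 2) = 0 := by
    convert tsum_zero with J
    rw [h J.1]
    simp
  rw [h1, mul_zero]
  rw [ENNReal.zero_rpow_of_pos (by norm_num)]

lemma linf_of_zero {a : DyadicInterval → ℝ} (h : ∀ I, a I = 0) : linftyNormR a = 0 := by
  refine le_antisymm (iSup_le fun I => ?_) (zero_le)
  rw [h I]
  simp

lemma sweep_of_zero {a : DyadicInterval → ℝ} (h : ∀ I, a I = 0) (K : DyadicInterval) :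
    sweepR a K = 0 := by
  rw [sweepR]
  convert tsum_zero with J
  rw [h J.1, zero_mul]

lemma Eseq_of_zero {a : DyadicInterval → ℝ} (h : ∀ I, a I = 0) (K : DyadicInterval) :
    EseqR a K = 0 := by
  rw [EseqR]
  have : ∑' J : {J : DyadicInterval // J ≤ K}, a J.1 = 0 := by
    convert tsum_zero with J
    exact h J.1
  rw [this, mul_zero]

/-- The main sequence-level estimate. -/
lemma main_seq (β δ : DyadicInterval → ℝ) :
    CMnormR (sweepR (schurR β δ)) + linftyNormR (EseqR (schurR β δ)) ≤
      3 * (CMnormR β * CMnormR δ) := by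
  by_cases hB : CMnormR β = ⊤
  · by_cases hD0 : CMnormR δ = 0
    · have hz : ∀ I, schurR β δ I = 0 := fun I => by
        rw [schurR, seq_zero_of_CM_zero hD0 I, mul_zero]
      rw [CM_of_zero (sweep_of_zero hz), linf_of_zero (Eseq_of_zero hz)]
      simp
    · rw [hB, ENNReal.top_mul hD0]
      simp [ENNReal.mul_top]
  · by_cases hD : CMnormR δ = ⊤
    · by_cases hB0 : CMnormR β = 0
      · have hz : ∀ I, schurR β δ I = 0 := fun I => by
          rw [schurR, seq_zero_of_CM_zero hB0 I, zero_mul]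
        rw [CM_of_zero (sweep_of_zero hz), linf_of_zero (Eseq_of_zero hz)]
        simp
      · rw [hD, ENNReal.mul_top hB0]
        simp [ENNReal.mul_top]
    · -- main case
      have hβ : Ctrl β (CMnormR β).toReal := ctrl_of_CM hB
      have hδ : Ctrl δ (CMnormR δ).toReal := ctrl_of_CM hD
      set KB := (CMnormR β).toReal with hKB
      set KD := (CMnormR δ).toReal with hKD
      calc CMnormR (sweepR (schurR β δ)) + linftyNormR (EseqR (schurR β δ))
          ≤ ENNReal.ofReal (2 * (KB * KD)) + ENNReal.ofReal (KB * KD) :=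
            add_le_add (sweep_CM_le hβ hδ) (E_linf_le hβ hδ)
        _ = ENNReal.ofReal (3 * (KB * KD)) := by
            rw [← ENNReal.ofReal_add (by have h1 := ENNReal.toReal_nonneg (a := CMnormR β); have h2 := ENNReal.toReal_nonneg (a := CMnormR δ); rw [← hKB] at h1; rw [← hKD] at h2; nlinarith) (by have h1 := ENNReal.toReal_nonneg (a := CMnormR β); have h2 := ENNReal.toReal_nonneg (a := CMnormR δ); rw [← hKB] at h1; rw [← hKD] at h2; nlinarith)]
            ring_nf
        _ ≤ 3 * (CMnormR β * CMnormR δ) := by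
            rw [ENNReal.ofReal_mul (by norm_num), ENNReal.ofReal_mul (by have h1 := ENNReal.toReal_nonneg (a := CMnormR β); have h2 := ENNReal.toReal_nonneg (a := CMnormR δ); rw [← hKB] at h1; rw [← hKD] at h2; nlinarith)]
            rw [ENNReal.ofReal_toReal hB, ENNReal.ofReal_toReal hD]
            refine mul_le_mul' ?_ (le_refl _)
            norm_num

/-- for `b, d` in dyadic BMO (norm expressed, via John–Nirenberg, as the
Carleson norm of the Haar coefficient sequence),
`‖Ŝ(b∘d)‖_CM + ‖E(b∘d)‖_{ℓ∞} ≲ ‖b‖_{BMO} ‖d‖_{BMO}`. -/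
theorem statement9 :
    ∃ C : ℝ≥0∞, 0 < C ∧ C ≠ ⊤ ∧
      ∀ b d : ℝ → ℝ, LocallyIntegrable b volume → LocallyIntegrable d volume →
        CMnormR (sweepR (schurR (fun I => haarInner b I) fun I => haarInner d I)) +
            linftyNormR (EseqR (schurR (fun I => haarInner b I) fun I => haarInner d I)) ≤
          C * (CMnormR (fun I => haarInner b I) * CMnormR fun I => haarInner d I) := by
  exact ⟨3, by norm_num, by norm_num, fun b d _ _ =>
    main_seq (fun I => haarInner b I) (fun I => haarInner d I)⟩
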